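/- In the topological amalgamated limit setting, correctness holds for the extended system: for all i, j ∈ I (whether or not i ∨ j exists) and all x_i ∈ X_i, x_j ∈ X_j with p^i_{i∧j}(x_i) = p^j_{i∧j}(x_j), there exists x ∈ X_ℓ with p^ℓ_i(x) = x_i and p^ℓ_j(x) = x_j. -/

import Mathlib

/-!
The points of `Π X_i` through `x_i` and `x_j` that are threads form an intersection of closed
subsets of a compact space, one for each pair `a ≤ b`, so it suffices to meet finitely many of
these constraints at once. By (iii), every finite subset of `I` lies below two elements `w₁ ≥ i`
and `w₂`. Correctness, transported below a common upper bound, extends `x_i` to a point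
`z₁ ∈ X_{w₁}` agreeing with `x_j`, and then a restriction of `x_j` to a point `z₂ ∈ X_{w₂}`
agreeing with `z₁` and `x_j`. The projections of `z₁` and `z₂` fit together into a partial thread
meeting the finitely many constraints.
-/

/-- A distributive almost-lattice: a partial order where any two elements have a meet,
any two elements with a common upper bound have a join, among any three elements two have
a common upper bound, the distributive laws hold whenever both sides exist, and
conditions (v) and (vi) hold. -/
structure DistribAlmostLattice (I : Type*) [PartialOrder I] where
  meet : I → I → I
  join : I → I → I
  /-- (i): `meet i j` is the greatest lower bound of `i` and `j` -/
  meet_isGLB : ∀ i j : I, IsGLB {i, j} (meet i j)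
  /-- (ii): if `i`, `j` have a common upper bound, `join i j` is their least upper bound -/
  join_isLUB : ∀ i j : I, (∃ u, i ≤ u ∧ j ≤ u) → IsLUB {i, j} (join i j)
  /-- (iii): among any three elements, two have a common upper bound -/
  two_of_three : ∀ i j k : I,
    (∃ u, i ≤ u ∧ j ≤ u) ∨ (∃ u, i ≤ u ∧ k ≤ u) ∨ (∃ u, j ≤ u ∧ k ≤ u)
  /-- (iv): distributivity of meet over join (whenever both sides exist) -/
  distrib_meet_join : ∀ i j k : I, (∃ u, j ≤ u ∧ k ≤ u) →
    meet i (join j k) = join (meet i j) (meet i k)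
  /-- (iv): distributivity of join over meet (whenever both sides exist) -/
  distrib_join_meet : ∀ i j k : I, (∃ u, i ≤ u ∧ j ≤ u) → (∃ u, i ≤ u ∧ k ≤ u) →
    join i (meet j k) = meet (join i j) (join i k)
  /-- (v) -/
  cond_v : ∀ i j j' : I, ¬(∃ u, i ≤ u ∧ j ≤ u) →
    ((¬(∃ u, i ≤ u ∧ j' ≤ u) ∧ ¬(∃ u, i ≤ u ∧ meet j j' ≤ u)) ∨
      join i j' = join i (meet j j'))
  /-- (vi) -/
  cond_vi : ∀ i j j' : I, ¬(∃ u, j ≤ u ∧ j' ≤ u) →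
    join (meet i j) (meet i j') = i

namespace DistribAlmostLattice

variable {I : Type*} [PartialOrder I] (L : DistribAlmostLattice I)

theorem meet_le_left (i j : I) : L.meet i j ≤ i :=
  (L.meet_isGLB i j).1 (Set.mem_insert _ _)

theorem meet_le_right (i j : I) : L.meet i j ≤ j :=
  (L.meet_isGLB i j).1 (Set.mem_insert_of_mem _ rfl)

theorem le_join_left (i j : I) (h : ∃ u, i ≤ u ∧ j ≤ u) : i ≤ L.join i j :=
  (L.join_isLUB i j h).1 (Set.mem_insert _ _)

theorem le_join_right (i j : I) (h : ∃ u, i ≤ u ∧ j ≤ u) : j ≤ L.join i j :=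
  (L.join_isLUB i j h).1 (Set.mem_insert_of_mem _ rfl)

end DistribAlmostLattice

/-- A subset `F` of a distributive almost-lattice is closed if it is closed under meets
and under joins whenever they exist. -/
def IsClosedSubset {I : Type*} [PartialOrder I] (L : DistribAlmostLattice I)
    (F : Set I) : Prop :=
  ∀ i ∈ F, ∀ j ∈ F, L.meet i j ∈ F ∧ ((∃ u, i ≤ u ∧ j ≤ u) → L.join i j ∈ F)

section TopAmal

variable {I : Type*} [PartialOrder I]
variable (X : I → Type*) (p : ∀ i j : I, i ≤ j → X j → X i)

/-- Membership in the topological amalgamated limit `X_ℓ ⊆ Π_{i∈I} X_i`. -/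
def InXl (x : ∀ i, X i) : Prop :=
  ∀ i j : I, ∀ hij : i ≤ j, p i j hij (x j) = x i

/-- Membership in `Y_F`: threads indexed by a subset `F ⊆ I`. -/
def InY (F : Set I) (y : ∀ i, X i) : Prop :=
  ∀ k ∈ F, ∀ j ∈ F, ∀ h : k ≤ j, p k j h (y j) = y k

end TopAmal

namespace DistribAlmostLattice

variable {I : Type*} [PartialOrder I]

theorem le_meet (L : DistribAlmostLattice I) {c i j : I} (hi : c ≤ i) (hj : c ≤ j) :
    c ≤ L.meet i j :=
  (L.meet_isGLB i j).2 (by simp [hi, hj])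

theorem join_le (L : DistribAlmostLattice I) {i j u : I} (hi : i ≤ u) (hj : j ≤ u) :
    L.join i j ≤ u :=
  (L.join_isLUB i j ⟨u, hi, hj⟩).2 (by simp [hi, hj])

theorem exists_cover_two (L : DistribAlmostLattice I) (i₀ : I) (E : Finset I) :
    ∃ u v : I, i₀ ≤ u ∧ ∀ e ∈ E, e ≤ u ∨ e ≤ v := by
  classical
  induction E using Finset.induction_on with
  | empty => exact ⟨i₀, i₀, le_rfl, by simp⟩
  | insert e E _ ih =>
    obtain ⟨u, v, hu, hcov⟩ := ih
    rcases L.two_of_three e u v with h | h | h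
    · refine ⟨L.join e u, v, hu.trans (L.le_join_right e u h), ?_⟩
      simp only [Finset.mem_insert, forall_eq_or_imp]
      refine ⟨Or.inl (L.le_join_left e u h), fun e' he' => ?_⟩
      exact (hcov e' he').imp_left (·.trans (L.le_join_right e u h))
    · refine ⟨u, L.join e v, hu, ?_⟩
      simp only [Finset.mem_insert, forall_eq_or_imp]
      refine ⟨Or.inr (L.le_join_left e v h), fun e' he' => ?_⟩
      exact (hcov e' he').imp_right (·.trans (L.le_join_right e v h))
    · refine ⟨L.join u v, e, hu.trans (L.le_join_left u v h), ?_⟩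
      simp only [Finset.mem_insert, forall_eq_or_imp]
      refine ⟨Or.inr le_rfl, fun e' he' => Or.inl ?_⟩
      rcases hcov e' he' with h' | h'
      · exact h'.trans (L.le_join_left u v h)
      · exact h'.trans (L.le_join_right u v h)

end DistribAlmostLattice

section InverseSystem

variable {I : Type*} [PartialOrder I] {X : I → Type*} {p : ∀ i j : I, i ≤ j → X j → X i}

variable (p) in
def MapsCompose : Prop :=
  ∀ i j k : I, ∀ hij : i ≤ j, ∀ hjk : j ≤ k, ∀ x : X k,
    p i j hij (p j k hjk x) = p i k (hij.trans hjk) x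

variable (p) in
def IsCorrect (L : DistribAlmostLattice I) : Prop :=
  ∀ i j : I, ∀ hub : ∃ u, i ≤ u ∧ j ≤ u, ∀ xi : X i, ∀ xj : X j,
    p (L.meet i j) i (L.meet_le_left i j) xi = p (L.meet i j) j (L.meet_le_right i j) xj →
    ∃ z : X (L.join i j),
      p i (L.join i j) (L.le_join_left i j hub) z = xi ∧
      p j (L.join i j) (L.le_join_right i j hub) z = xj

variable (p) in
def Agree {a b : I} (xa : X a) (xb : X b) : Prop :=
  ∀ c : I, ∀ (ha : c ≤ a) (hb : c ≤ b), p c a ha xa = p c b hb xb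

theorem Agree.symm {a b : I} {xa : X a} {xb : X b} (h : Agree p xa xb) : Agree p xb xa :=
  fun c ha hb => (h c hb ha).symm

theorem Agree.map_left (hcomp : MapsCompose p) {a a' b : I} {xa : X a} {xb : X b}
    (h : Agree p xa xb) (ha' : a' ≤ a) : Agree p (p a' a ha' xa) xb := fun c hc hb => by
  rw [hcomp, h]

theorem Agree.map_eq (hid : ∀ i : I, ∀ hii : i ≤ i, ∀ x : X i, p i i hii x = x)
    {w b : I} {z : X w} {y : X b} (h : Agree p z y) (hb : b ≤ w) : p b w hb z = y := by
  rw [h b hb le_rfl, hid]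

theorem agree_of_map_meet_eq (hcomp : MapsCompose p) (L : DistribAlmostLattice I) {a b : I}
    {xa : X a} {xb : X b}
    (h : p (L.meet a b) a (L.meet_le_left a b) xa = p (L.meet a b) b (L.meet_le_right a b) xb) :
    Agree p xa xb := fun c ha hb => by
  have hc := L.le_meet ha hb
  rw [← hcomp c _ a hc (L.meet_le_left a b), h, hcomp]

theorem exists_glue_of_le (hcomp : MapsCompose p)
    (hsurj : ∀ i j : I, ∀ hij : i ≤ j, Function.Surjective (p i j hij))
    {L : DistribAlmostLattice I} (hcor : IsCorrect p L) {a b w : I} (ha : a ≤ w) (hb : b ≤ w)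
    {xa : X a} {xb : X b}
    (h : p (L.meet a b) a (L.meet_le_left a b) xa = p (L.meet a b) b (L.meet_le_right a b) xb) :
    ∃ z : X w, p a w ha z = xa ∧ p b w hb z = xb := by
  have hub : ∃ u, a ≤ u ∧ b ≤ u := ⟨w, ha, hb⟩
  obtain ⟨z', hz'a, hz'b⟩ := hcor a b hub xa xb h
  obtain ⟨z, rfl⟩ := hsurj _ w (L.join_le ha hb) z'
  exact ⟨z, by rwa [hcomp] at hz'a, by rwa [hcomp] at hz'b⟩

theorem exists_extend_of_agree (hcomp : MapsCompose p)
    (hsurj : ∀ i j : I, ∀ hij : i ≤ j, Function.Surjective (p i j hij))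
    {L : DistribAlmostLattice I} (hcor : IsCorrect p L) {a b w : I} (ha : a ≤ w)
    {xa : X a} {y : X b} (h : Agree p xa y) :
    ∃ z : X w, p a w ha z = xa ∧ Agree p z y := by
  set m := L.meet w b
  have hmb : m ≤ b := L.meet_le_right w b
  have hxa : p (L.meet a m) a (L.meet_le_left a m) xa =
      p (L.meet a m) m (L.meet_le_right a m) (p m b hmb y) := by
    rw [hcomp]
    exact h _ _ _
  obtain ⟨z, hza, hzm⟩ := exists_glue_of_le hcomp hsurj hcor ha (L.meet_le_left w b) hxa
  exact ⟨z, hza, agree_of_map_meet_eq hcomp L hzm⟩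

theorem exists_pi_of_agree [∀ i, Nonempty (X i)] {w₁ w₂ : I} {z₁ : X w₁} {z₂ : X w₂}
    (h : Agree p z₁ z₂) :
    ∃ x : ∀ l, X l, (∀ l (hl : l ≤ w₁), x l = p l w₁ hl z₁) ∧
      ∀ l (hl : l ≤ w₂), x l = p l w₂ hl z₂ := by
  classical
  refine ⟨fun l => if hl : l ≤ w₁ then p l w₁ hl z₁ else
    if hl' : l ≤ w₂ then p l w₂ hl' z₂ else Classical.arbitrary _, fun l hl => dif_pos hl,
    fun l hl => ?_⟩
  by_cases hl₁ : l ≤ w₁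
  · simp only [dif_pos hl₁, h l hl₁ hl]
  · simp only [dif_neg hl₁, dif_pos hl]

theorem exists_thread_of_cover_two [∀ i, Nonempty (X i)]
    (hsurj : ∀ i j : I, ∀ hij : i ≤ j, Function.Surjective (p i j hij))
    (hid : ∀ i : I, ∀ hii : i ≤ i, ∀ x : X i, p i i hii x = x) (hcomp : MapsCompose p)
    {L : DistribAlmostLattice I} (hcor : IsCorrect p L) {i j w₁ w₂ : I} (hi : i ≤ w₁)
    (hj : j ≤ w₁ ∨ j ≤ w₂) {xi : X i} {xj : X j} (hxij : Agree p xi xj) :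
    ∃ x : ∀ l, X l, x i = xi ∧ x j = xj ∧
      ∀ a b : I, ∀ hab : a ≤ b, (b ≤ w₁ ∨ b ≤ w₂) → p a b hab (x b) = x a := by
  obtain ⟨z₁, hz₁i, hz₁j⟩ := exists_extend_of_agree hcomp hsurj hcor hi hxij
  have hm : L.meet w₂ j ≤ w₂ := L.meet_le_left w₂ j
  obtain ⟨z₂, hz₂m, hz₂z₁⟩ := exists_extend_of_agree hcomp hsurj hcor hm
    (hz₁j.symm.map_left hcomp (L.meet_le_right w₂ j))
  have hz₂j : Agree p z₂ xj := agree_of_map_meet_eq hcomp L hz₂m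
  obtain ⟨x, hx₁, hx₂⟩ := exists_pi_of_agree hz₂z₁.symm
  refine ⟨x, by rw [hx₁ i hi, hz₁i], ?_, fun a b hab hb => ?_⟩
  · rcases hj with hj | hj
    · rw [hx₁ j hj, hz₁j.map_eq hid]
    · rw [hx₂ j hj, hz₂j.map_eq hid]
  · rcases hb with hb | hb
    · rw [hx₁ b hb, hx₁ a (hab.trans hb), hcomp]
    · rw [hx₂ b hb, hx₂ a (hab.trans hb), hcomp]

end InverseSystem

theorem exists_inXl_mem_of_forall_finset {I : Type*} [PartialOrder I] {X : I → Type*}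
    [∀ i, TopologicalSpace (X i)] [∀ i, CompactSpace (X i)] [∀ i, T2Space (X i)]
    {p : ∀ i j : I, i ≤ j → X j → X i} (hcont : ∀ i j : I, ∀ hij : i ≤ j, Continuous (p i j hij))
    {T : Set (∀ i, X i)} (hT : IsClosed T)
    (hfin : ∀ E : Finset I, ∃ x ∈ T, ∀ a b : I, ∀ hab : a ≤ b, b ∈ E → p a b hab (x b) = x a) :
    ∃ x ∈ T, InXl X p x := by
  classical
  let C : {q : I × I // q.1 ≤ q.2} → Set (∀ i, X i) :=
    fun q => {x | p q.1.1 q.1.2 q.2 (x q.1.2) = x q.1.1}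
  have hC : ∀ q, IsClosed (C q) := fun q =>
    isClosed_eq ((hcont _ _ q.2).comp (continuous_apply _)) (continuous_apply _)
  obtain ⟨x, hxT, hxC⟩ := hT.isCompact.inter_iInter_nonempty C hC fun u => by
    obtain ⟨x, hxT, hx⟩ := hfin (u.image fun q => q.1.2)
    exact ⟨x, hxT, Set.mem_iInter₂.2 fun q hq => hx _ _ q.2 (Finset.mem_image_of_mem _ hq)⟩
  exact ⟨x, hxT, fun a b hab => Set.mem_iInter.1 hxC ⟨(a, b), hab⟩⟩

theorem Xl_correctness_general
    {I : Type*} [PartialOrder I] (L : DistribAlmostLattice I)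
    (X : I → Type*) [∀ i, TopologicalSpace (X i)]
    [∀ i, Nonempty (X i)] [∀ i, CompactSpace (X i)] [∀ i, T2Space (X i)]
    (p : ∀ i j : I, i ≤ j → X j → X i)
    (hcont : ∀ i j : I, ∀ hij : i ≤ j, Continuous (p i j hij))
    (hsurj : ∀ i j : I, ∀ hij : i ≤ j, Function.Surjective (p i j hij))
    (hid : ∀ i : I, ∀ hii : i ≤ i, ∀ x : X i, p i i hii x = x)
    (hcomp : ∀ i j k : I, ∀ hij : i ≤ j, ∀ hjk : j ≤ k, ∀ x : X k,
      p i j hij (p j k hjk x) = p i k (hij.trans hjk) x)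
    (hcor : ∀ i j : I, ∀ hub : ∃ u, i ≤ u ∧ j ≤ u, ∀ xi : X i, ∀ xj : X j,
      p (L.meet i j) i (L.meet_le_left i j) xi =
        p (L.meet i j) j (L.meet_le_right i j) xj →
      ∃ z : X (L.join i j),
        p i (L.join i j) (L.le_join_left i j hub) z = xi ∧
        p j (L.join i j) (L.le_join_right i j hub) z = xj) :
    ∀ i j : I, ∀ xi : X i, ∀ xj : X j,
      p (L.meet i j) i (L.meet_le_left i j) xi =
        p (L.meet i j) j (L.meet_le_right i j) xj →
      ∃ x : ∀ i, X i, InXl X p x ∧ x i = xi ∧ x j = xj := by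
  classical
  intro i j xi xj hxij
  have hT : IsClosed {x : ∀ l, X l | x i = xi ∧ x j = xj} :=
    (isClosed_eq (continuous_apply i) continuous_const).inter
      (isClosed_eq (continuous_apply j) continuous_const)
  obtain ⟨x, ⟨hxi, hxj⟩, hx⟩ := exists_inXl_mem_of_forall_finset hcont hT fun E => by
    obtain ⟨w₁, w₂, hi, hcov⟩ := L.exists_cover_two i (insert j E)
    obtain ⟨x, hxi, hxj, hx⟩ := exists_thread_of_cover_two hsurj hid hcomp hcor hi
      (hcov j (Finset.mem_insert_self j E)) (agree_of_map_meet_eq hcomp L hxij)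
    exact ⟨x, ⟨hxi, hxj⟩, fun a b hab hb => hx a b hab (hcov b (Finset.mem_insert_of_mem hb))⟩
  exact ⟨x, hx, hxi, hxj⟩

/-- Correctness holds for the extended system: any two points with equal projections to
`X_{i∧j}` are simultaneously realized by a point of `X_ℓ`. -/
theorem Xl_correctness
    {I : Type*} [PartialOrder I] (L : DistribAlmostLattice I)
    (X : I → Type*) [∀ i, TopologicalSpace (X i)]
    [∀ i, Nonempty (X i)] [∀ i, CompactSpace (X i)] [∀ i, T2Space (X i)]
    (p : ∀ i j : I, i ≤ j → X j → X i)
    (hcont : ∀ i j : I, ∀ hij : i ≤ j, Continuous (p i j hij))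
    (hopen : ∀ i j : I, ∀ hij : i ≤ j, IsOpenMap (p i j hij))
    (hsurj : ∀ i j : I, ∀ hij : i ≤ j, Function.Surjective (p i j hij))
    (hid : ∀ i : I, ∀ hii : i ≤ i, ∀ x : X i, p i i hii x = x)
    (hcomp : ∀ i j k : I, ∀ hij : i ≤ j, ∀ hjk : j ≤ k, ∀ x : X k,
      p i j hij (p j k hjk x) = p i k (hij.trans hjk) x)
    (hcor : ∀ i j : I, ∀ hub : ∃ u, i ≤ u ∧ j ≤ u, ∀ xi : X i, ∀ xj : X j,
      p (L.meet i j) i (L.meet_le_left i j) xi =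
        p (L.meet i j) j (L.meet_le_right i j) xj →
      ∃ z : X (L.join i j),
        p i (L.join i j) (L.le_join_left i j hub) z = xi ∧
        p j (L.join i j) (L.le_join_right i j hub) z = xj) :
    ∀ i j : I, ∀ xi : X i, ∀ xj : X j,
      p (L.meet i j) i (L.meet_le_left i j) xi =
        p (L.meet i j) j (L.meet_le_right i j) xj →
      ∃ x : ∀ i, X i, InXl X p x ∧ x i = xi ∧ x j = xj :=
  Xl_correctness_general L X p hcont hsurj hid hcomp hcor
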